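/- arXiv:1803.04875 — 5 statements merged into one kernel-verified Lean document; each statement's English description precedes it below -/
import Mathlib

section
/- Let S be the smallest set of pairs of integers that contains (3,1) and is closed under the three maps (m,n) ↦ (2m+n, m), (m,n) ↦ (2n+m, n), and (m,n) ↦ (2m-n, m). If m and n are odd integers with m > n ≥ 1 and gcd(m,n) = 1, then (m,n) ∈ S. -/
/-!
Every odd coprime pair `m > n ≥ 1` other than `(3, 1)` is a child of an odd coprime pair with a
smaller first entry: of `(m - 2n, n)` via the second map if `m > 3n`, of `(n, m - 2n)` via the first
if `2n < m < 3n`, and of `(n, 2n - m)` via the third if `m < 2n`. Coprimality excludes `m = 2n` and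
allows `m = 3n` only for `(3, 1)`, so descent on `m` ends at the root.
-/

def OddCoprimePair (m n : ℤ) : Prop :=
  Odd m ∧ Odd n ∧ n < m ∧ 1 ≤ n ∧ IsCoprime m n

namespace OddCoprimePair

variable {m n : ℤ}

lemma eq_three_one_of_eq_three_mul (h : OddCoprimePair m n) (h3 : m = 3 * n) : m = 3 ∧ n = 1 := by
  obtain ⟨-, -, -, hn, hcop⟩ := h
  rw [h3] at hcop
  have hn1 : n = 1 := by
    rcases Int.isUnit_iff.mp (isCoprime_self.mp hcop.of_mul_left_right) with h | h <;> omega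
  omega

lemma sub_two_mul_left (h : OddCoprimePair m n) (h3 : 3 * n < m) : OddCoprimePair (m - 2 * n) n := by
  obtain ⟨hm, hn, -, hn1, hcop⟩ := h
  refine ⟨hm.sub_even (even_two_mul n), hn, by omega, hn1, ?_⟩
  simpa [sub_eq_add_neg, mul_comm] using hcop.add_mul_right_left (-2)

lemma sub_two_mul_right (h : OddCoprimePair m n) (h2 : 2 * n < m) (h3 : m < 3 * n) :
    OddCoprimePair n (m - 2 * n) := by
  obtain ⟨hm, hn, -, -, hcop⟩ := h
  refine ⟨hn, hm.sub_even (even_two_mul n), by omega, by omega, ?_⟩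
  simpa [sub_eq_add_neg, mul_comm] using hcop.symm.add_mul_left_right (-2)

lemma two_mul_sub (h : OddCoprimePair m n) (h2 : m < 2 * n) : OddCoprimePair n (2 * n - m) := by
  obtain ⟨hm, hn, hnm, -, hcop⟩ := h
  refine ⟨hn, (even_two_mul n).sub_odd hm, by omega, by omega, ?_⟩
  simpa [sub_eq_add_neg, add_comm, mul_comm] using hcop.symm.neg_right.add_mul_left_right 2

end OddCoprimePair

theorem mem_of_oddCoprimePair {T : Set (ℤ × ℤ)} (h31 : ((3 : ℤ), (1 : ℤ)) ∈ T)
    (hT : ∀ m n : ℤ, (m, n) ∈ T → (2 * m + n, m) ∈ T ∧ (2 * n + m, n) ∈ T ∧ (2 * m - n, m) ∈ T)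
    {m n : ℤ} (h : OddCoprimePair m n) : (m, n) ∈ T := by
  obtain ⟨-, -, hnm, hn, -⟩ := id h
  rcases lt_trichotomy (3 * n) m with h3 | h3 | h3
  · have hparent := mem_of_oddCoprimePair h31 hT (h.sub_two_mul_left h3)
    simpa using (hT _ _ hparent).2.1
  · obtain ⟨rfl, rfl⟩ := h.eq_three_one_of_eq_three_mul h3.symm
    exact h31
  rcases lt_trichotomy (2 * n) m with h2 | h2 | h2
  · have hparent := mem_of_oddCoprimePair h31 hT (h.sub_two_mul_right h2 h3)
    simpa using (hT _ _ hparent).1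
  · exact absurd h.1 (by rw [← h2]; simp)
  · have hparent := mem_of_oddCoprimePair h31 hT (h.two_mul_sub h2)
    simpa using (hT _ _ hparent).2.2
termination_by m.toNat
decreasing_by all_goals omega

theorem tree31_complete (S : Set (ℤ × ℤ))
    (hS : S = ⋂₀ {T : Set (ℤ × ℤ) | ((3 : ℤ), (1 : ℤ)) ∈ T ∧
      ∀ m n : ℤ, (m, n) ∈ T →
        (2 * m + n, m) ∈ T ∧ (2 * n + m, n) ∈ T ∧ (2 * m - n, m) ∈ T})
    (m n : ℤ) (hodd_m : Odd m) (hodd_n : Odd n)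
    (hmn : m > n) (hn : n ≥ 1) (hgcd : Int.gcd m n = 1) :
    (m, n) ∈ S := by
  subst hS
  rintro T ⟨h31, hT⟩
  exact mem_of_oddCoprimePair h31 hT
    ⟨hodd_m, hodd_n, hmn, hn, Int.isCoprime_iff_gcd_eq_one.mpr hgcd⟩
end

section
/- Let S be the smallest set of pairs of integers that contains (2,1) and is closed under the three maps (m,n) ↦ (2m+n, m), (m,n) ↦ (2n+m, n), and (m,n) ↦ (2m-n, m). Then every pair (m,n) in S satisfies: m > n ≥ 1, m and n have opposite parity (m + n is odd), and gcd(m,n) = 1. -/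
/-! Each of the three maps preserves the conjunction of the four properties: the new second
coordinate is the old first one, `(2m ± n) + m` differs from `m + n` by an even number, and
`gcd (2m ± n, m) = gcd (n, m)`. The root `(2, 1)` has them, so by minimality every pair of the
tree does. -/

/-- The conditions on `(m, n)` under which `(m² - n², 2mn, m² + n²)` is a primitive
Pythagorean triple. -/
structure IsPrimitivePythagoreanParam (m n : ℤ) : Prop where
  lt : n < m
  one_le : 1 ≤ n
  odd_add : Odd (m + n)
  isCoprime : IsCoprime m n

namespace IsPrimitivePythagoreanParam

variable {m n : ℤ}

theorem two_one : IsPrimitivePythagoreanParam 2 1 :=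
  ⟨by norm_num, le_rfl, ⟨1, by norm_num⟩, Int.isCoprime_iff_gcd_eq_one.2 rfl⟩

theorem two_mul_add (h : IsPrimitivePythagoreanParam m n) :
    IsPrimitivePythagoreanParam (2 * m + n) m where
  lt := by linarith [h.lt, h.one_le]
  one_le := by linarith [h.lt, h.one_le]
  odd_add := by
    rw [show 2 * m + n + m = m + n + 2 * m by ring]
    exact h.odd_add.add_even (even_two_mul m)
  isCoprime := by
    rw [add_comm]
    exact h.isCoprime.symm.add_mul_right_left 2

theorem add_two_mul (h : IsPrimitivePythagoreanParam m n) :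
    IsPrimitivePythagoreanParam (2 * n + m) n where
  lt := by linarith [h.lt, h.one_le]
  one_le := h.one_le
  odd_add := by
    rw [show 2 * n + m + n = m + n + 2 * n by ring]
    exact h.odd_add.add_even (even_two_mul n)
  isCoprime := by
    rw [add_comm]
    exact h.isCoprime.add_mul_right_left 2

theorem two_mul_sub (h : IsPrimitivePythagoreanParam m n) :
    IsPrimitivePythagoreanParam (2 * m - n) m where
  lt := by linarith [h.lt]
  one_le := by linarith [h.lt, h.one_le]
  odd_add := by
    rw [show 2 * m - n + m = m + n + 2 * (m - n) by ring]
    exact h.odd_add.add_even (even_two_mul (m - n))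
  isCoprime := by
    rw [← neg_add_eq_sub]
    exact h.isCoprime.symm.neg_left.add_mul_right_left 2

end IsPrimitivePythagoreanParam

theorem tree21_sound (S : Set (ℤ × ℤ))
    (hS : S = ⋂₀ {T : Set (ℤ × ℤ) | ((2 : ℤ), (1 : ℤ)) ∈ T ∧
      ∀ m n : ℤ, (m, n) ∈ T →
        (2 * m + n, m) ∈ T ∧ (2 * n + m, n) ∈ T ∧ (2 * m - n, m) ∈ T})
    (m n : ℤ) (hmem : (m, n) ∈ S) :
    m > n ∧ n ≥ 1 ∧ Odd (m + n) ∧ Int.gcd m n = 1 := by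
  subst hS
  have h : IsPrimitivePythagoreanParam m n :=
    Set.mem_sInter.1 hmem {p | IsPrimitivePythagoreanParam p.1 p.2}
      ⟨.two_one, fun _ _ h => ⟨h.two_mul_add, h.add_two_mul, h.two_mul_sub⟩⟩
  exact ⟨h.lt, h.one_le, h.odd_add, Int.isCoprime_iff_gcd_eq_one.1 h.isCoprime⟩
end

section
/- Let S be the smallest set of pairs of integers that contains (2,1) and is closed under the three maps (m,n) ↦ (2m+n, m), (m,n) ↦ (2n+m, n), and (m,n) ↦ (2m-n, m). If m and n are integers of opposite parity (m + n odd) with m > n ≥ 1 and gcd(m,n) = 1, then (m,n) ∈ S. -/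
/-!
Every pair (m, n) of coprime integers of opposite parity with m > n ≥ 1, other than (2, 1), is
a child of such a pair with a smaller first entry: of (n, 2n - m) if m < 2n, of (n, m - 2n) if
2n < m < 3n, and of (m - 2n, n) if m > 3n. The cases m = 2n and m = 3n force n = 1 by
coprimality, and then parity leaves only (2, 1). Strong induction on m concludes.
-/

namespace Tree21

def Admissible (m n : ℤ) : Prop :=
  Odd (m + n) ∧ n < m ∧ 1 ≤ n ∧ Int.gcd m n = 1

def IsChild (p q : ℤ × ℤ) : Prop :=
  p = (2 * q.1 + q.2, q.1) ∨ p = (2 * q.2 + q.1, q.2) ∨ p = (2 * q.1 - q.2, q.1)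

lemma eq_one_of_gcd_mul_eq_one {n k : ℤ} (hn : 1 ≤ n) (h : Int.gcd (k * n) n = 1) : n = 1 := by
  rw [Int.gcd_mul_left_left] at h
  omega

lemma gcd_two_mul_sub {m n : ℤ} : Int.gcd n (2 * n - m) = Int.gcd m n := by
  rw [show 2 * n - m = -(m - 2 * n) by ring, Int.gcd_neg, Int.gcd_sub_mul_right_right,
    Int.gcd_comm]

lemma exists_parent {m n : ℤ} (h : Admissible m n) (hne : (m, n) ≠ (2, 1)) :
    ∃ a b : ℤ, Admissible a b ∧ a < m ∧ IsChild (m, n) (a, b) := by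
  obtain ⟨hpar, hnm, hn, hgcd⟩ := h
  rw [Int.odd_iff] at hpar
  rcases lt_trichotomy m (2 * n) with hlt | heq | hgt
  · refine ⟨n, 2 * n - m, ⟨?_, by omega, by omega, by rwa [gcd_two_mul_sub]⟩, hnm, ?_⟩
    · rw [Int.odd_iff]; omega
    · right; right; simp
  · have hn1 : n = 1 := eq_one_of_gcd_mul_eq_one (k := 2) hn (heq ▸ hgcd)
    exact absurd (by rw [heq, hn1]; norm_num) hne
  rcases lt_trichotomy m (3 * n) with hlt | heq | hgt'
  · refine ⟨n, m - 2 * n, ⟨?_, by omega, by omega, ?_⟩, hnm, ?_⟩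
    · rw [Int.odd_iff]; omega
    · rwa [Int.gcd_comm, Int.gcd_sub_mul_right_left]
    · left; simp
  · have hn1 : n = 1 := eq_one_of_gcd_mul_eq_one (k := 3) hn (heq ▸ hgcd)
    omega
  · refine ⟨m - 2 * n, n, ⟨?_, by omega, hn, ?_⟩, by omega, ?_⟩
    · rw [Int.odd_iff]; omega
    · rwa [Int.gcd_sub_mul_right_left]
    · right; left; simp

lemma mem_of_admissible {T : Set (ℤ × ℤ)} (hbase : (2, 1) ∈ T)
    (hstep : ∀ p q, IsChild p q → q ∈ T → p ∈ T) :
    ∀ m n : ℤ, Admissible m n → (m, n) ∈ T := by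
  suffices ∀ k : ℕ, ∀ m n : ℤ, m.toNat = k → Admissible m n → (m, n) ∈ T from
    fun m n => this _ m n rfl
  intro k
  induction k using Nat.strong_induction_on with
  | _ k ih =>
    intro m n hk h
    by_cases hne : (m, n) = (2, 1)
    · exact hne ▸ hbase
    obtain ⟨a, b, hab, ham, hchild⟩ := exists_parent h hne
    have hba : b < a := hab.2.1
    have hb : 1 ≤ b := hab.2.2.1
    exact hstep _ _ hchild (ih a.toNat (by omega) a b rfl hab)

end Tree21

open Tree21 in
theorem tree21_complete (S : Set (ℤ × ℤ))
    (hS : S = ⋂₀ {T : Set (ℤ × ℤ) | ((2 : ℤ), (1 : ℤ)) ∈ T ∧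
      ∀ m n : ℤ, (m, n) ∈ T →
        (2 * m + n, m) ∈ T ∧ (2 * n + m, n) ∈ T ∧ (2 * m - n, m) ∈ T})
    (m n : ℤ) (hpar : Odd (m + n))
    (hmn : m > n) (hn : n ≥ 1) (hgcd : Int.gcd m n = 1) :
    (m, n) ∈ S := by
  subst hS
  rintro T ⟨hbase, hstep⟩
  refine mem_of_admissible hbase ?_ m n ⟨hpar, hmn, hn, hgcd⟩
  rintro p ⟨a, b⟩ hchild hq
  obtain ⟨h₁, h₂, h₃⟩ := hstep a b hq
  rcases hchild with rfl | rfl | rfl <;> assumption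
end

section
/- Let S₂ and S₃ be, respectively, the smallest sets of pairs of integers containing (2,1) and (3,1) and closed under the three maps (m,n) ↦ (2m+n, m), (m,n) ↦ (2n+m, n), and (m,n) ↦ (2m-n, m). Then every pair of integers (m,n) with m > n ≥ 1 and gcd(m,n) = 1 belongs to S₂ ∪ S₃, and the sets S₂ and S₃ are disjoint. -/
theorem trees_cover_and_disjoint (S₂ S₃ : Set (ℤ × ℤ))
    (hS₂ : S₂ = ⋂₀ {T : Set (ℤ × ℤ) | ((2 : ℤ), (1 : ℤ)) ∈ T ∧
      ∀ m n : ℤ, (m, n) ∈ T →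
        (2 * m + n, m) ∈ T ∧ (2 * n + m, n) ∈ T ∧ (2 * m - n, m) ∈ T})
    (hS₃ : S₃ = ⋂₀ {T : Set (ℤ × ℤ) | ((3 : ℤ), (1 : ℤ)) ∈ T ∧
      ∀ m n : ℤ, (m, n) ∈ T →
        (2 * m + n, m) ∈ T ∧ (2 * n + m, n) ∈ T ∧ (2 * m - n, m) ∈ T}) :
    (∀ m n : ℤ, m > n → n ≥ 1 → Int.gcd m n = 1 → (m, n) ∈ S₂ ∪ S₃) ∧
    Disjoint S₂ S₃ := by
  -- S₂ contains its seed and is closed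
  have hseed₂ : ((2 : ℤ), (1 : ℤ)) ∈ S₂ := by
    rw [hS₂]; intro T hT; exact hT.1
  have hcl₂ : ∀ m n : ℤ, (m, n) ∈ S₂ →
      (2 * m + n, m) ∈ S₂ ∧ (2 * n + m, n) ∈ S₂ ∧ (2 * m - n, m) ∈ S₂ := by
    rw [hS₂]; intro m n h
    refine ⟨?_, ?_, ?_⟩ <;> intro T hT
    · exact (hT.2 m n (h T hT)).1
    · exact (hT.2 m n (h T hT)).2.1
    · exact (hT.2 m n (h T hT)).2.2
  have hseed₃ : ((3 : ℤ), (1 : ℤ)) ∈ S₃ := by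
    rw [hS₃]; intro T hT; exact hT.1
  have hcl₃ : ∀ m n : ℤ, (m, n) ∈ S₃ →
      (2 * m + n, m) ∈ S₃ ∧ (2 * n + m, n) ∈ S₃ ∧ (2 * m - n, m) ∈ S₃ := by
    rw [hS₃]; intro m n h
    refine ⟨?_, ?_, ?_⟩ <;> intro T hT
    · exact (hT.2 m n (h T hT)).1
    · exact (hT.2 m n (h T hT)).2.1
    · exact (hT.2 m n (h T hT)).2.2
  constructor
  · -- coverage, by strong induction on m.natAbs
    have key : ∀ N : ℕ, ∀ m n : ℤ, m.natAbs = N → m > n → n ≥ 1 →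
        Int.gcd m n = 1 → (m, n) ∈ S₂ ∪ S₃ := by
      intro N
      induction N using Nat.strong_induction_on with
      | _ N ih =>
        intro m n hN hmn hn hg
        have hcop : IsCoprime m n := Int.isCoprime_iff_gcd_eq_one.2 hg
        rcases lt_trichotomy m (2 * n) with h | h | h
        · -- parent (n, 2n - m), child via third map
          have hg' : Int.gcd n (2 * n - m) = 1 := by
            rw [← Int.isCoprime_iff_gcd_eq_one]
            have e : 2 * n - m = -m + n * 2 := by ring
            rw [e]; exact (hcop.symm.neg_right).add_mul_left_right 2
          have hp : (n, 2 * n - m) ∈ S₂ ∪ S₃ :=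
            ih n.natAbs (by omega) n (2 * n - m) rfl (by omega) (by omega) hg'
          have e : (2 * n - (2 * n - m), n) = ((m : ℤ), n) := by
            norm_num
          rcases hp with hp | hp
          · left; have := (hcl₂ n (2 * n - m) hp).2.2; rwa [e] at this
          · right; have := (hcl₃ n (2 * n - m) hp).2.2; rwa [e] at this
        · -- m = 2n forces n = 1
          have hn1 : n = 1 := by
            have hu := hcop.isUnit_of_dvd' ⟨2, by omega⟩ dvd_rfl
            rw [Int.isUnit_iff] at hu
            omega
          left
          have : m = 2 := by omega
          rw [this, hn1]; exact hseed₂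
        · rcases lt_trichotomy m (3 * n) with h3 | h3 | h3
          · -- parent (n, m - 2n), child via first map
            have hg' : Int.gcd n (m - 2 * n) = 1 := by
              rw [← Int.isCoprime_iff_gcd_eq_one]
              have e : m - 2 * n = m + n * -2 := by ring
              rw [e]; exact hcop.symm.add_mul_left_right (-2)
            have hp : (n, m - 2 * n) ∈ S₂ ∪ S₃ :=
              ih n.natAbs (by omega) n (m - 2 * n) rfl (by omega) (by omega) hg'
            have e : (2 * n + (m - 2 * n), n) = ((m : ℤ), n) := by
              norm_num
            rcases hp with hp | hp
            · left; have := (hcl₂ n (m - 2 * n) hp).1; rwa [e] at this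
            · right; have := (hcl₃ n (m - 2 * n) hp).1; rwa [e] at this
          · -- m = 3n forces n = 1
            have hn1 : n = 1 := by
              have hu := hcop.isUnit_of_dvd' ⟨3, by omega⟩ dvd_rfl
              rw [Int.isUnit_iff] at hu
              omega
            right
            have : m = 3 := by omega
            rw [this, hn1]; exact hseed₃
          · -- parent (m - 2n, n), child via second map
            have hg' : Int.gcd (m - 2 * n) n = 1 := by
              rw [← Int.isCoprime_iff_gcd_eq_one]
              have e : m - 2 * n = m + -2 * n := by ring
              rw [e]; exact hcop.add_mul_right_left (-2)
            have hp : (m - 2 * n, n) ∈ S₂ ∪ S₃ :=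
              ih (m - 2 * n).natAbs (by omega) (m - 2 * n) n rfl (by omega) (by omega) hg'
            have e : (2 * n + (m - 2 * n), n) = ((m : ℤ), n) := by
              norm_num
            rcases hp with hp | hp
            · left; have := (hcl₂ (m - 2 * n) n hp).2.1; rwa [e] at this
            · right; have := (hcl₃ (m - 2 * n) n hp).2.1; rwa [e] at this
    intro m n hmn hn hg
    exact key m.natAbs m n rfl hmn hn hg
  · -- disjointness via parity of m + n
    have hodd : S₂ ⊆ {p : ℤ × ℤ | (p.1 + p.2) % 2 = 1} := by
      rw [hS₂]
      intro p hp
      refine hp _ ⟨by norm_num, ?_⟩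
      intro m n hmn
      simp only [Set.mem_setOf_eq] at hmn ⊢
      omega
    have heven : S₃ ⊆ {p : ℤ × ℤ | (p.1 + p.2) % 2 = 0} := by
      rw [hS₃]
      intro p hp
      refine hp _ ⟨by norm_num, ?_⟩
      intro m n hmn
      simp only [Set.mem_setOf_eq] at hmn ⊢
      omega
    rw [Set.disjoint_left]
    intro p hp2 hp3
    have h1 := hodd hp2
    have h2 := heven hp3
    simp only [Set.mem_setOf_eq] at h1 h2
    omega
end

section
/- Let T be the smallest set of quadruples of integers that contains (3, 1, 0, 1) and is closed under the three maps (m,n,u,v) ↦ (2m+n, m, v, u-2v), (m,n,u,v) ↦ (2n+m, n, u, v-2u), and (m,n,u,v) ↦ (2m-n, m, -v, u+2v). If m and n are odd integers with m > n ≥ 1 and gcd(m,n) = 1, then there exist integers u and v with (m,n,u,v) ∈ T (and hence m·u + n·v = 1). -/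
theorem bezout_tree31_complete (T : Set (ℤ × ℤ × ℤ × ℤ))
    (hT : T = ⋂₀ {W : Set (ℤ × ℤ × ℤ × ℤ) | ((3 : ℤ), (1 : ℤ), (0 : ℤ), (1 : ℤ)) ∈ W ∧
      ∀ m n u v : ℤ, (m, n, u, v) ∈ W →
        (2 * m + n, m, v, u - 2 * v) ∈ W ∧
        (2 * n + m, n, u, v - 2 * u) ∈ W ∧
        (2 * m - n, m, -v, u + 2 * v) ∈ W})
    (m n : ℤ) (hodd_m : Odd m) (hodd_n : Odd n)
    (hmn : m > n) (hn : n ≥ 1) (hgcd : Int.gcd m n = 1) :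
    ∃ u v : ℤ, (m, n, u, v) ∈ T ∧ m * u + n * v = 1 := by
  have hroot : ((3 : ℤ), (1 : ℤ), (0 : ℤ), (1 : ℤ)) ∈ T := by
    rw [hT]; intro W hW; exact hW.1
  have hstep : ∀ a b u v : ℤ, (a, b, u, v) ∈ T →
      (2 * a + b, a, v, u - 2 * v) ∈ T ∧
      (2 * b + a, b, u, v - 2 * u) ∈ T ∧
      (2 * a - b, a, -v, u + 2 * v) ∈ T := by
    intro a b u v h
    refine ⟨?_, ?_, ?_⟩ <;> (rw [hT]; intro W hW)
    · exact (hW.2 a b u v (by rw [hT] at h; exact h W hW)).1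
    · exact (hW.2 a b u v (by rw [hT] at h; exact h W hW)).2.1
    · exact (hW.2 a b u v (by rw [hT] at h; exact h W hW)).2.2
  have key : ∀ k : ℕ, ∀ m n : ℤ, m.natAbs ≤ k → m % 2 = 1 → n % 2 = 1 →
      m > n → n ≥ 1 → (∃ a b : ℤ, a * m + b * n = 1) →
      ∃ u v : ℤ, (m, n, u, v) ∈ T ∧ m * u + n * v = 1 := by
    intro k
    induction k with
    | zero => intro m n hk _ _ hmn hn _; omega
    | succ k IH =>
      intro m n hk hm2 hn2 hmn hn hcop
      obtain ⟨a, b, hab⟩ := hcop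
      rcases lt_trichotomy m (2 * n) with hlt | heq | hgt
      · -- parent (n, 2n - m) via third child
        obtain ⟨u, v, hmem, hbez⟩ := IH n (2 * n - m) (by omega) (by omega) (by omega)
          (by omega) (by omega) ⟨b + 2 * a, -a, by linear_combination hab⟩
        have h3 := (hstep n (2 * n - m) u v hmem).2.2
        have hrw : 2 * n - (2 * n - m) = m := by ring
        rw [hrw] at h3
        exact ⟨-v, u + 2 * v, h3, by linear_combination hbez⟩
      · omega
      · rcases lt_trichotomy (m - 2 * n) n with h1 | h1 | h1
        · -- parent (n, m - 2n) via first child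
          obtain ⟨u, v, hmem, hbez⟩ := IH n (m - 2 * n) (by omega) (by omega) (by omega)
            (by omega) (by omega) ⟨b + 2 * a, a, by linear_combination hab⟩
          have h3 := (hstep n (m - 2 * n) u v hmem).1
          have hrw : 2 * n + (m - 2 * n) = m := by ring
          rw [hrw] at h3
          exact ⟨v, u - 2 * v, h3, by linear_combination hbez⟩
        · -- m = 3n, so n = 1, m = 3
          have hdvd : n ∣ 1 := ⟨3 * a + b, by linear_combination -hab + a * h1⟩
          have hn1 : n = 1 := by
            have := Int.le_of_dvd one_pos hdvd; omega
          have hm3 : m = 3 := by omega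
          subst hn1; subst hm3
          exact ⟨0, 1, hroot, by norm_num⟩
        · -- parent (m - 2n, n) via second child
          obtain ⟨u, v, hmem, hbez⟩ := IH (m - 2 * n) n (by omega) (by omega) (by omega)
            (by omega) (by omega) ⟨a, b + 2 * a, by linear_combination hab⟩
          have h3 := (hstep (m - 2 * n) n u v hmem).2.1
          have hrw : 2 * n + (m - 2 * n) = m := by ring
          rw [hrw] at h3
          exact ⟨u, v - 2 * u, h3, by linear_combination hbez⟩
  obtain ⟨a, b, hab⟩ := Int.isCoprime_iff_gcd_eq_one.mpr hgcd
  exact key m.natAbs m n le_rfl (Int.odd_iff.mp hodd_m) (Int.odd_iff.mp hodd_n) hmn hn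
    ⟨a, b, hab⟩
end
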